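/- Let D = ⟨x, y | x^(2^r) = y^(2^s) = [x,y]^2 = [x,[x,y]] = [y,[x,y]] = 1⟩ with r ≥ s ≥ 1. Then the number of conjugacy classes of D (equivalently, the number of irreducible complex characters of D) is 5·2^(r+s-2). -/

import Mathlib

open scoped commutatorElement

/-- The generator `x` of the free group on two letters. -/
def gx : FreeGroup (Fin 2) := FreeGroup.of 0

/-- The generator `y` of the free group on two letters. -/
def gy : FreeGroup (Fin 2) := FreeGroup.of 1

/-- The relations of the Rédei presentation with parameters `r`, `s`:
`x^(2^r)`, `y^(2^s)`, `⁅x,y⁆^2`, `⁅x,⁅x,y⁆⁆`, `⁅y,⁅x,y⁆⁆`,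
where `⁅a,b⁆ = a*b*a⁻¹*b⁻¹`. -/
def redeiRels (r s : ℕ) : Set (FreeGroup (Fin 2)) :=
  {gx ^ (2 ^ r), gy ^ (2 ^ s), ⁅gx, gy⁆ ^ 2, ⁅gx, ⁅gx, gy⁆⁆, ⁅gy, ⁅gx, gy⁆⁆}

/-- The Rédei group `⟨x,y ∣ x^(2^r) = y^(2^s) = [x,y]^2 = [x,[x,y]] = [y,[x,y]] = 1⟩`. -/
abbrev RedeiGroup (r s : ℕ) := PresentedGroup (redeiRels r s)

/-- The image of the generator `x` in the Rédei group. -/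
def Dx (r s : ℕ) : RedeiGroup r s := PresentedGroup.of 0

/-- The image of the generator `y` in the Rédei group. -/
def Dy (r s : ℕ) : RedeiGroup r s := PresentedGroup.of 1

/-- The element `z = [x,y]` of the Rédei group. -/
def Dz (r s : ℕ) : RedeiGroup r s := ⁅Dx r s, Dy r s⁆

/-!
Send `x` and `y` to `(1, 0, 0)` and `(0, 1, 0)` in `ZMod (2^r) × ZMod (2^s) × ZMod 2` with the
twisted product `(a, b, c) * (a', b', c') = (a + a', b + b', c + c' + b̄ ā')`, where `ā` is the
reduction of `a` mod 2. These images satisfy the relations, and since `[x, y]` is central every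
element of `D` is `x^A y^B [x, y]^C`, so the two groups are isomorphic. In the model, conjugation
by `w` only moves the last coordinate, by `b̄_w ā - b̄ ā_w`: the element `(a, b, c)` is central
when `a` and `b` are both even, and is conjugate to `(a, b, c + 1)` otherwise. That gives
`2^(r+s) + 2^(r-1) 2^(s-1) = 5 · 2^(r+s-2)` classes.
-/

lemma AddMonoidHom.card_ker_mul_card_of_surjective {G H : Type*} [AddGroup G] [AddGroup H]
    (f : G →+ H) (hf : Function.Surjective f) : Nat.card f.ker * Nat.card H = Nat.card G := by
  rw [← f.ker.card_mul_index, AddSubgroup.index_ker f, f.range_eq_top.2 hf, AddSubgroup.card_top]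

lemma MulEquiv.isConj_apply_iff {G H : Type*} [Group G] [Group H] (e : G ≃* H) {a b : G} :
    IsConj (e a) (e b) ↔ IsConj a b :=
  ⟨fun h => by simpa using e.symm.toMonoidHom.map_isConj h, e.toMonoidHom.map_isConj⟩

lemma MulEquiv.card_conjClasses_eq {G H : Type*} [Group G] [Group H] (e : G ≃* H) :
    Nat.card (ConjClasses G) = Nat.card (ConjClasses H) :=
  Nat.card_congr <| Quotient.congr e.toEquiv fun _ _ => e.isConj_apply_iff.symm

section CentralCommutator

variable {G : Type*} [Group G] {x y c : G}

lemma mul_pow_eq_pow_mul_mul_pow (hcx : Commute c x) (hyx : y * x = x * y * c)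
    (n : ℕ) : y * x ^ n = x ^ n * y * c ^ n := by
  induction n with
  | zero => simp
  | succ n ih =>
    calc y * x ^ (n + 1) = x ^ n * y * (c ^ n * x) := by rw [pow_succ, ← mul_assoc, ih]; group
      _ = x ^ n * (y * x) * c ^ n := by rw [(hcx.pow_left n).eq]; group
      _ = x ^ (n + 1) * y * c ^ (n + 1) := by rw [hyx]; group

lemma exists_eq_pow_mul_pow_mul_pow_of_mem_closure (hcx : Commute c x) (hcy : Commute c y)
    (hyx : y * x = x * y * c) (hx : IsOfFinOrder x) (hy : IsOfFinOrder y) {g : G}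
    (hg : g ∈ Subgroup.closure {x, y}) : ∃ A B C : ℕ, g = x ^ A * y ^ B * c ^ C := by
  rw [← Subgroup.mem_toSubmonoid,
    Subgroup.closure_toSubmonoid_of_isOfFinOrder (by simp [hx, hy])] at hg
  induction hg using Submonoid.closure_induction_left with
  | one => exact ⟨0, 0, 0, by simp⟩
  | mul_left z hz g _ ih =>
    obtain ⟨A, B, C, rfl⟩ := ih
    rcases hz with rfl | rfl
    · exact ⟨A + 1, B, C, by group⟩
    · refine ⟨A, B + 1, C + A, ?_⟩
      calc z * (x ^ A * z ^ B * c ^ C) = x ^ A * z * (c ^ A * z ^ B) * c ^ C := by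
            rw [← mul_assoc, ← mul_assoc, mul_pow_eq_pow_mul_mul_pow hcx hyx]; group
        _ = x ^ A * z ^ (B + 1) * c ^ (C + A) := by
            rw [((hcy.pow_left A).pow_right B).eq]; group

end CentralCommutator

namespace RedeiGroup

variable {r s : ℕ}

lemma Dx_pow_two_pow : Dx r s ^ 2 ^ r = 1 :=
  PresentedGroup.one_of_mem (x := gx ^ 2 ^ r) (by simp [redeiRels])

lemma Dy_pow_two_pow : Dy r s ^ 2 ^ s = 1 :=
  PresentedGroup.one_of_mem (x := gy ^ 2 ^ s) (by simp [redeiRels])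

lemma Dz_sq : Dz r s ^ 2 = 1 :=
  PresentedGroup.one_of_mem (x := ⁅gx, gy⁆ ^ 2) (by simp [redeiRels])

lemma commute_Dz_Dx : Commute (Dz r s) (Dx r s) :=
  (commutatorElement_eq_one_iff_commute.1 <|
    PresentedGroup.one_of_mem (x := ⁅gx, ⁅gx, gy⁆⁆) (by simp [redeiRels])).symm

lemma commute_Dz_Dy : Commute (Dz r s) (Dy r s) :=
  (commutatorElement_eq_one_iff_commute.1 <|
    PresentedGroup.one_of_mem (x := ⁅gy, ⁅gx, gy⁆⁆) (by simp [redeiRels])).symm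

lemma Dy_mul_Dx : Dy r s * Dx r s = Dx r s * Dy r s * Dz r s := by
  have hz : (Dz r s)⁻¹ = Dz r s := inv_eq_of_mul_eq_one_left (by rw [← sq, Dz_sq])
  calc Dy r s * Dx r s = (Dz r s)⁻¹ * (Dx r s * Dy r s) := by rw [Dz]; group
    _ = Dx r s * Dy r s * Dz r s := by
      rw [hz, ((commute_Dz_Dx).mul_right commute_Dz_Dy).eq]

lemma exists_eq_pow_mul_pow_mul_pow (g : RedeiGroup r s) :
    ∃ A B C : ℕ, g = Dx r s ^ A * Dy r s ^ B * Dz r s ^ C := by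
  refine exists_eq_pow_mul_pow_mul_pow_of_mem_closure commute_Dz_Dx commute_Dz_Dy Dy_mul_Dx
    (isOfFinOrder_iff_pow_eq_one.2 ⟨_, by positivity, Dx_pow_two_pow⟩)
    (isOfFinOrder_iff_pow_eq_one.2 ⟨_, by positivity, Dy_pow_two_pow⟩) ?_
  have hrange : Set.range (PresentedGroup.of : Fin 2 → RedeiGroup r s) = {Dx r s, Dy r s} := by
    ext; simp [Fin.exists_fin_two, Dx, Dy, eq_comm]
  simp [← hrange]

end RedeiGroup

@[ext]
structure TwistedProd {A B : Type*} [AddCommGroup A] [AddCommGroup B]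
    (χ : A →+ ZMod 2) (ψ : B →+ ZMod 2) where
  a : A
  b : B
  c : ZMod 2

namespace TwistedProd

variable {A B : Type*} [AddCommGroup A] [AddCommGroup B] {χ : A →+ ZMod 2} {ψ : B →+ ZMod 2}

instance : Mul (TwistedProd χ ψ) := ⟨fun u v => ⟨u.a + v.a, u.b + v.b, u.c + v.c + ψ u.b * χ v.a⟩⟩
instance : One (TwistedProd χ ψ) := ⟨⟨0, 0, 0⟩⟩
instance : Inv (TwistedProd χ ψ) := ⟨fun u => ⟨-u.a, -u.b, -u.c + ψ u.b * χ u.a⟩⟩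

@[simp] lemma mul_a (u v : TwistedProd χ ψ) : (u * v).a = u.a + v.a := rfl
@[simp] lemma mul_b (u v : TwistedProd χ ψ) : (u * v).b = u.b + v.b := rfl
@[simp] lemma mul_c (u v : TwistedProd χ ψ) : (u * v).c = u.c + v.c + ψ u.b * χ v.a := rfl
@[simp] lemma one_a : (1 : TwistedProd χ ψ).a = 0 := rfl
@[simp] lemma one_b : (1 : TwistedProd χ ψ).b = 0 := rfl
@[simp] lemma one_c : (1 : TwistedProd χ ψ).c = 0 := rfl
@[simp] lemma inv_a (u : TwistedProd χ ψ) : u⁻¹.a = -u.a := rfl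
@[simp] lemma inv_b (u : TwistedProd χ ψ) : u⁻¹.b = -u.b := rfl
@[simp] lemma inv_c (u : TwistedProd χ ψ) : u⁻¹.c = -u.c + ψ u.b * χ u.a := rfl

instance : Group (TwistedProd χ ψ) where
  mul_assoc u v w := by ext <;> simp <;> grind
  one_mul u := by ext <;> simp
  mul_one u := by ext <;> simp
  inv_mul_cancel u := by ext <;> simp; grind

lemma mk_zero_zero_zero : (⟨0, 0, 0⟩ : TwistedProd χ ψ) = 1 := rfl

lemma conj_eq (w u : TwistedProd χ ψ) :
    w * u * w⁻¹ = ⟨u.a, u.b, u.c + ψ w.b * χ u.a - ψ u.b * χ w.a⟩ := by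
  ext <;> simp; grind

lemma commutatorElement_eq (u v : TwistedProd χ ψ) :
    ⁅u, v⁆ = ⟨0, 0, ψ u.b * χ v.a - ψ v.b * χ u.a⟩ := by
  rw [commutatorElement_def, conj_eq]; ext <;> simp; grind

lemma mk_a_pow (a : A) (n : ℕ) : (⟨a, 0, 0⟩ : TwistedProd χ ψ) ^ n = ⟨n • a, 0, 0⟩ := by
  induction n with
  | zero => ext <;> simp
  | succ n ih => ext <;> simp [pow_succ, ih, succ_nsmul]

lemma mk_b_pow (b : B) (n : ℕ) : (⟨0, b, 0⟩ : TwistedProd χ ψ) ^ n = ⟨0, n • b, 0⟩ := by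
  induction n with
  | zero => ext <;> simp
  | succ n ih => ext <;> simp [pow_succ, ih, succ_nsmul]

lemma mk_c_pow (c : ZMod 2) (n : ℕ) : (⟨0, 0, c⟩ : TwistedProd χ ψ) ^ n = ⟨0, 0, n • c⟩ := by
  induction n with
  | zero => ext <;> simp
  | succ n ih => ext <;> simp [pow_succ, ih, add_mul]

lemma mk_zero_zero_sq (c : ZMod 2) : (⟨0, 0, c⟩ : TwistedProd χ ψ) ^ 2 = 1 := by
  ext <;> simp [sq, CharTwo.add_self_eq_zero]

lemma mk_eq_mul (a : A) (b : B) (c : ZMod 2) :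
    (⟨a, b, c⟩ : TwistedProd χ ψ) = ⟨a, 0, 0⟩ * ⟨0, b, 0⟩ * ⟨0, 0, c⟩ := by
  ext <;> simp

lemma isConj_iff (hχ : Function.Surjective χ) (hψ : Function.Surjective ψ)
    {u v : TwistedProd χ ψ} :
    IsConj u v ↔ u.a = v.a ∧ u.b = v.b ∧ (χ u.a = 0 → ψ u.b = 0 → u.c = v.c) := by
  rw [_root_.isConj_iff]
  constructor
  · rintro ⟨w, rfl⟩
    rw [conj_eq]
    exact ⟨rfl, rfl, fun ha hb => by simp [ha, hb]⟩
  · rintro ⟨ha, hb, hc⟩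
    have one_of_ne_zero : ∀ t : ZMod 2, t ≠ 0 → t = 1 := by decide
    by_cases hua : χ u.a = 0
    · by_cases hub : ψ u.b = 0
      · exact ⟨1, by ext <;> simp [ha, hb, hc hua hub]⟩
      · obtain ⟨a', ha'⟩ := hχ (u.c - v.c)
        refine ⟨⟨a', 0, 0⟩, ?_⟩
        rw [conj_eq]; ext <;> simp [← ha, ← hb, ha', one_of_ne_zero _ hub]
    · obtain ⟨b', hb'⟩ := hψ (v.c - u.c)
      refine ⟨⟨0, b', 0⟩, ?_⟩
      rw [conj_eq]; ext <;> simp [← ha, ← hb, hb', one_of_ne_zero _ hua]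

def classInvariant (u : TwistedProd χ ψ) : (A × B) ⊕ (χ.ker × ψ.ker) :=
  if h : χ u.a = 0 ∧ ψ u.b = 0 ∧ u.c = 1 then .inr (⟨u.a, h.1⟩, ⟨u.b, h.2.1⟩)
  else .inl (u.a, u.b)

lemma isConj_iff_classInvariant_eq (hχ : Function.Surjective χ) (hψ : Function.Surjective ψ)
    {u v : TwistedProd χ ψ} :
    IsConj u v ↔ classInvariant u = classInvariant v := by
  have zmod_two : ∀ t : ZMod 2, t = 0 ∨ t = 1 := by decide
  have := zmod_two u.c
  have := zmod_two v.c
  rw [isConj_iff hχ hψ, classInvariant, classInvariant]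
  split_ifs <;> simp <;> grind

lemma classInvariant_surjective : Function.Surjective (classInvariant (χ := χ) (ψ := ψ)) := by
  rintro (⟨a, b⟩ | ⟨⟨a, ha⟩, ⟨b, hb⟩⟩)
  · exact ⟨⟨a, b, 0⟩, by simp [classInvariant]⟩
  · rw [AddMonoidHom.mem_ker] at ha hb
    exact ⟨⟨a, b, 1⟩, by simp [classInvariant, ha, hb]⟩

lemma card_conjClasses [Finite A] [Finite B] (hχ : Function.Surjective χ)
    (hψ : Function.Surjective ψ) :
    Nat.card (ConjClasses (TwistedProd χ ψ)) =
      Nat.card A * Nat.card B + Nat.card χ.ker * Nat.card ψ.ker := by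
  have hker : IsConj.setoid (TwistedProd χ ψ) = Setoid.ker classInvariant :=
    Setoid.ext fun _ _ => isConj_iff_classInvariant_eq hχ hψ
  rw [ConjClasses, hker, Nat.card_congr (Setoid.quotientKerEquivOfSurjective _
    classInvariant_surjective)]
  simp [Nat.card_prod]

lemma four_mul_card_conjClasses [Finite A] [Finite B] (hχ : Function.Surjective χ)
    (hψ : Function.Surjective ψ) :
    4 * Nat.card (ConjClasses (TwistedProd χ ψ)) = 5 * (Nat.card A * Nat.card B) := by
  rw [card_conjClasses hχ hψ, ← χ.card_ker_mul_card_of_surjective hχ,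
    ← ψ.card_ker_mul_card_of_surjective hψ, Nat.card_zmod]
  ring

end TwistedProd

def reduceModTwo {r : ℕ} (hr : r ≠ 0) : ZMod (2 ^ r) →+ ZMod 2 :=
  (ZMod.castHom (dvd_pow_self 2 hr) (ZMod 2)).toAddMonoidHom

@[simp]
lemma reduceModTwo_one {r : ℕ} (hr : r ≠ 0) : reduceModTwo hr 1 = 1 :=
  map_one (ZMod.castHom (dvd_pow_self 2 hr) _)

lemma reduceModTwo_surjective {r : ℕ} (hr : r ≠ 0) : Function.Surjective (reduceModTwo hr) :=
  ZMod.castHom_surjective (dvd_pow_self 2 hr)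

namespace RedeiGroup

variable {r s : ℕ} (hr : r ≠ 0) (hs : s ≠ 0)

abbrev Model := TwistedProd (reduceModTwo hr) (reduceModTwo hs)

def modelGenerators : Fin 2 → Model hr hs := ![⟨1, 0, 0⟩, ⟨0, 1, 0⟩]

lemma lift_modelGenerators_eq_one :
    ∀ x ∈ redeiRels r s, FreeGroup.lift (modelGenerators hr hs) x = 1 := by
  have hX : (⟨1, 0, 0⟩ : Model hr hs) ^ 2 ^ r = 1 := by
    rw [TwistedProd.mk_a_pow, nsmul_one, ZMod.natCast_self]; rfl
  have hY : (⟨0, 1, 0⟩ : Model hr hs) ^ 2 ^ s = 1 := by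
    rw [TwistedProd.mk_b_pow, nsmul_one, ZMod.natCast_self]; rfl
  rintro _ (rfl | rfl | rfl | rfl | rfl) <;>
    simp [modelGenerators, gx, gy, hX, hY, TwistedProd.commutatorElement_eq,
      TwistedProd.mk_zero_zero_sq, TwistedProd.mk_zero_zero_zero]

def toModel : RedeiGroup r s →* Model hr hs :=
  PresentedGroup.toGroup (lift_modelGenerators_eq_one hr hs)

@[simp] lemma toModel_Dx : toModel hr hs (Dx r s) = ⟨1, 0, 0⟩ := PresentedGroup.toGroup.of _

@[simp] lemma toModel_Dy : toModel hr hs (Dy r s) = ⟨0, 1, 0⟩ := PresentedGroup.toGroup.of _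

@[simp] lemma toModel_Dz : toModel hr hs (Dz r s) = ⟨0, 0, 1⟩ := by
  rw [Dz, map_commutatorElement, toModel_Dx, toModel_Dy, TwistedProd.commutatorElement_eq]
  ext <;> simp

def ofModel (u : Model hr hs) : RedeiGroup r s :=
  Dx r s ^ u.a.val * Dy r s ^ u.b.val * Dz r s ^ u.c.val

lemma toModel_ofModel (u : Model hr hs) : toModel hr hs (ofModel hr hs u) = u := by
  rw [ofModel, map_mul, map_mul, map_pow, map_pow, map_pow, toModel_Dx, toModel_Dy, toModel_Dz,
    TwistedProd.mk_a_pow, TwistedProd.mk_b_pow, TwistedProd.mk_c_pow, nsmul_one, nsmul_one,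
    nsmul_one, ZMod.natCast_zmod_val, ZMod.natCast_zmod_val, ZMod.natCast_zmod_val,
    ← TwistedProd.mk_eq_mul]

lemma ofModel_surjective : Function.Surjective (ofModel hr hs) := by
  intro g
  obtain ⟨A, B, C, rfl⟩ := exists_eq_pow_mul_pow_mul_pow g
  refine ⟨⟨A, B, C⟩, ?_⟩
  simp only [ofModel, ZMod.val_natCast, ← pow_eq_pow_mod _ Dx_pow_two_pow,
    ← pow_eq_pow_mod _ Dy_pow_two_pow, ← pow_eq_pow_mod _ Dz_sq]

def equivModel : RedeiGroup r s ≃* Model hr hs where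
  toFun := toModel hr hs
  invFun := ofModel hr hs
  left_inv := Function.LeftInverse.rightInverse_of_surjective (toModel_ofModel hr hs)
    (ofModel_surjective hr hs)
  right_inv := toModel_ofModel hr hs
  map_mul' := map_mul _

end RedeiGroup

theorem stmt3 (r s : ℕ) (hs : 1 ≤ s) (hrs : s ≤ r) :
    Nat.card (ConjClasses (RedeiGroup r s)) = 5 * 2 ^ (r + s - 2) := by
  have hs₀ : s ≠ 0 := by omega
  have hr₀ : r ≠ 0 := by omega
  have key := TwistedProd.four_mul_card_conjClasses (reduceModTwo_surjective hr₀)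
    (reduceModTwo_surjective hs₀)
  rw [← (RedeiGroup.equivModel hr₀ hs₀).card_conjClasses_eq, Nat.card_zmod, Nat.card_zmod,
    ← pow_add, show r + s = r + s - 2 + 2 by omega, pow_add] at key
  omega
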